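/- arXiv:2202.05340 — 3 statements merged into one kernel-verified Lean document; each statement's English description precedes it below -/
import Mathlib

section
/- Let Γ be a graph, K a field of characteristic zero, p a path in Γ, η_1,…,η_n tropical 1-forms on Γ, and S_n the symmetric group on n letters. Then Σ_{σ ∈ S_n} ∫_p η_{σ(1)}⋯η_{σ(n)} = ∏_{i=1}^n ∫_p η_i. -/
open scoped BigOperators Classical

/-- A combinatorial graph in the sense of Gersten, with a distinguished element `∘` (`base`). -/
structure CombGraph where
  carrier : Type
  fintype : Fintype carrier
  decEq : DecidableEq carrier
  inv : carrier → carrier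
  inv_inv : ∀ x, inv (inv x) = x
  base : carrier
  base_fixed : inv base = base
  init : carrier → carrier
  init_fixed : ∀ x, inv (init x) = init x
  init_init : ∀ x, init (init x) = init x
  init_of_fixed : ∀ x, inv x = x → init x = x
  base_cond : ∀ x, init x = base → init (inv x) = base → x = base

attribute [instance] CombGraph.fintype CombGraph.decEq

namespace CombGraph

variable (G : CombGraph)

/-- Vertices are the fixed points of the involution other than `∘`. -/
def IsVertex (x : G.carrier) : Prop := G.inv x = x ∧ x ≠ G.base

/-- Closed directed edges: directed edges whose both endpoints are genuine vertices. -/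
def IsClosedDir (e : G.carrier) : Prop :=
  G.inv e ≠ e ∧ G.init e ≠ G.base ∧ G.init (G.inv e) ≠ G.base

/-- A graph is proper if all of its edges are closed. -/
def IsProper : Prop := ∀ e, G.inv e ≠ e → G.init e ≠ G.base

/-- `IsPath G a b p`: the list of closed directed edges `p` is a path from `a` to `b`. -/
def IsPath : G.carrier → G.carrier → List G.carrier → Prop
  | a, b, [] => a = b
  | a, b, e :: p => G.IsClosedDir e ∧ G.init e = a ∧ IsPath (G.init (G.inv e)) b p

/-- A graph is connected if any two vertices are joined by a path. -/
def Connected : Prop :=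
  ∀ a b, G.IsVertex a → G.IsVertex b → ∃ p, G.IsPath a b p

variable (K : Type) [Field K]

/-- The space of tropical `1`-forms: antisymmetric, harmonic functions on directed edges. -/
def Omega1 : Submodule K (G.carrier → K) where
  carrier := {η | (∀ e, η (G.inv e) = - η e) ∧
    ∀ v, G.IsVertex v →
      (∑ e ∈ Finset.univ.filter (fun e => G.init e = v ∧ G.inv e ≠ e), η e) = 0}
  add_mem' := by
    rintro η η' ⟨h1, h2⟩ ⟨h1', h2'⟩
    refine ⟨fun e => ?_, fun v hv => ?_⟩
    · simp only [Pi.add_apply, h1 e, h1' e]; ring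
    · simp only [Pi.add_apply, Finset.sum_add_distrib, h2 v hv, h2' v hv, add_zero]
  zero_mem' := by
    refine ⟨fun e => by simp, fun v hv => by simp⟩
  smul_mem' := by
    rintro c η ⟨h1, h2⟩
    refine ⟨fun e => ?_, fun v hv => ?_⟩
    · simp only [Pi.smul_apply, smul_eq_mul, h1 e]; ring
    · simp only [Pi.smul_apply, smul_eq_mul, ← Finset.mul_sum, h2 v hv, mul_zero]

/-- The integral of a list of `1`-forms along a single directed edge. -/
noncomputable def edgeInt (e : G.carrier) (ηs : List (G.carrier → K)) : K :=
  (ηs.map (fun η => η e)).prod / (Nat.factorial ηs.length)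

/-- Combinatorial iterated integration of a list of `1`-forms along a list of edges,
defined by the single edge formula and the concatenation rule. -/
noncomputable def iint : List G.carrier → List (G.carrier → K) → K
  | [], ηs => if ηs.isEmpty then 1 else 0
  | e :: p, ηs => ∑ i ∈ Finset.range (ηs.length + 1),
      G.edgeInt K e (ηs.take i) * iint p (ηs.drop i)

end CombGraph


namespace SymAux

theorem take_insertIdx_of_le {α : Type*} (x : α) :
    ∀ (L : List α) (i k : ℕ), i ≤ k → k ≤ L.length →
      (L.insertIdx k x).take i = L.take i := by
  intro L
  induction L with
  | nil =>
    intro i k hik hk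
    simp only [List.length_nil, Nat.le_zero] at hk
    subst hk
    simp only [Nat.le_zero] at hik
    subst hik
    simp
  | cons a L ih =>
    intro i k hik hk
    cases k with
    | zero =>
      simp only [Nat.le_zero] at hik; subst hik; simp
    | succ k =>
      cases i with
      | zero => simp
      | succ i =>
        rw [List.insertIdx_succ_cons]
        simp only [List.take_succ_cons]
        rw [ih i k (Nat.succ_le_succ_iff.mp hik)
          (Nat.succ_le_succ_iff.mp (by simpa using hk))]

theorem drop_insertIdx_of_le {α : Type*} (x : α) :
    ∀ (L : List α) (i k : ℕ), i ≤ k → k ≤ L.length →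
      (L.insertIdx k x).drop i = (L.drop i).insertIdx (k - i) x := by
  intro L
  induction L with
  | nil =>
    intro i k hik hk
    simp only [List.length_nil, Nat.le_zero] at hk
    subst hk
    simp only [Nat.le_zero] at hik
    subst hik
    simp
  | cons a L ih =>
    intro i k hik hk
    cases k with
    | zero =>
      simp only [Nat.le_zero] at hik; subst hik; simp
    | succ k =>
      cases i with
      | zero => simp
      | succ i =>
        rw [List.insertIdx_succ_cons]
        simp only [List.drop_succ_cons, Nat.succ_sub_succ]
        exact ih i k (Nat.succ_le_succ_iff.mp hik)
          (Nat.succ_le_succ_iff.mp (by simpa using hk))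

theorem take_insertIdx_of_lt {α : Type*} (x : α) :
    ∀ (L : List α) (i k : ℕ), k ≤ i → k ≤ L.length →
      (L.insertIdx k x).take (i + 1) = (L.take i).insertIdx k x := by
  intro L
  induction L with
  | nil =>
    intro i k hik hk
    simp only [List.length_nil, Nat.le_zero] at hk
    subst hk
    simp
  | cons a L ih =>
    intro i k hik hk
    cases k with
    | zero => simp
    | succ k =>
      obtain ⟨i, rfl⟩ : ∃ j, i = j + 1 := ⟨i - 1, by omega⟩
      rw [List.insertIdx_succ_cons]
      simp only [List.take_succ_cons, List.insertIdx_succ_cons]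
      rw [ih i k (by omega) (by simpa using hk)]

theorem drop_insertIdx_of_lt {α : Type*} (x : α) :
    ∀ (L : List α) (i k : ℕ), k ≤ i → k ≤ L.length →
      (L.insertIdx k x).drop (i + 1) = L.drop i := by
  intro L
  induction L with
  | nil =>
    intro i k hik hk
    simp only [List.length_nil, Nat.le_zero] at hk
    subst hk
    simp
  | cons a L ih =>
    intro i k hik hk
    cases k with
    | zero => simp
    | succ k =>
      obtain ⟨i, rfl⟩ : ∃ j, i = j + 1 := ⟨i - 1, by omega⟩
      rw [List.insertIdx_succ_cons]
      simp only [List.drop_succ_cons]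
      exact ih i k (by omega) (by simpa using hk)

theorem sum_triangle {M : Type*} [AddCommMonoid M] (N : ℕ) (f : ℕ → ℕ → M) :
    ∑ k ∈ Finset.range N, ∑ i ∈ Finset.range (k + 1), f k i
      = ∑ i ∈ Finset.range N, ∑ j ∈ Finset.range (N - i), f (i + j) i := by
  induction N with
  | zero => simp
  | succ N ih =>
    rw [Finset.sum_range_succ, ih]
    have h1 : ∀ i ∈ Finset.range (N + 1),
        ∑ j ∈ Finset.range (N + 1 - i), f (i + j) i
          = ∑ j ∈ Finset.range (N - i), f (i + j) i + f N i := by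
      intro i hi
      rw [Finset.mem_range] at hi
      have h2 : N + 1 - i = (N - i) + 1 := by omega
      rw [h2, Finset.sum_range_succ]
      congr 2
      omega
    rw [Finset.sum_congr rfl h1, Finset.sum_add_distrib,
      Finset.sum_range_succ (fun i => ∑ j ∈ Finset.range (N - i), f (i + j) i)]
    simp only [Nat.sub_self, Finset.range_zero, Finset.sum_empty, add_zero]

variable (G : CombGraph) (K : Type) [Field K]

theorem edgeInt_nil (e : G.carrier) : G.edgeInt K e [] = 1 := by
  simp [CombGraph.edgeInt]

theorem edgeInt_single (e : G.carrier) (η : G.carrier → K) :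
    G.edgeInt K e [η] = η e := by
  simp [CombGraph.edgeInt]

theorem edgeInt_perm (e : G.carrier) {L L' : List (G.carrier → K)} (h : L.Perm L') :
    G.edgeInt K e L = G.edgeInt K e L' := by
  unfold CombGraph.edgeInt
  rw [(h.map (fun η => η e)).prod_eq, h.length_eq]

theorem edgeInt_cons [CharZero K] (e : G.carrier) (η : G.carrier → K)
    (L : List (G.carrier → K)) :
    ((L.length : K) + 1) * G.edgeInt K e (η :: L) = η e * G.edgeInt K e L := by
  unfold CombGraph.edgeInt
  rw [List.map_cons, List.prod_cons, List.length_cons, Nat.factorial_succ]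
  have h1 : ((L.length.factorial : K)) ≠ 0 := by
    exact_mod_cast Nat.factorial_ne_zero L.length
  have h2 : ((L.length : K) + 1) ≠ 0 := by
    have : ((L.length + 1 : ℕ) : K) ≠ 0 := Nat.cast_ne_zero.mpr (Nat.succ_ne_zero _)
    push_cast at this
    exact this
  push_cast
  field_simp

theorem iint_nil_forms : ∀ p : List G.carrier, G.iint K p [] = 1 := by
  intro p
  induction p with
  | nil => simp [CombGraph.iint]
  | cons e q ih => simp [CombGraph.iint, edgeInt_nil, ih]

theorem iint_nil_edges_of_ne (L : List (G.carrier → K)) (h : L ≠ []) :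
    G.iint K [] L = 0 := by
  simp [CombGraph.iint, h]

theorem iint_cons_single (e : G.carrier) (q : List G.carrier) (η : G.carrier → K) :
    G.iint K (e :: q) [η] = η e + G.iint K q [η] := by
  show (∑ i ∈ Finset.range 2, G.edgeInt K e ([η].take i) * G.iint K q ([η].drop i)) = _
  rw [Finset.sum_range_succ, Finset.sum_range_one]
  simp [edgeInt_nil, edgeInt_single, iint_nil_forms]
  ring

theorem shuffle_one [CharZero K] (η : G.carrier → K) :
    ∀ (p : List G.carrier) (L : List (G.carrier → K)),
      G.iint K p L * G.iint K p [η]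
        = ∑ k ∈ Finset.range (L.length + 1), G.iint K p (L.insertIdx k η) := by
  intro p
  induction p with
  | nil =>
    intro L
    rw [iint_nil_edges_of_ne G K [η] (by simp), mul_zero]
    symm
    apply Finset.sum_eq_zero
    intro k hk
    rw [Finset.mem_range] at hk
    apply iint_nil_edges_of_ne
    intro hcon
    have hlen := List.length_insertIdx_of_le_length (i := k) (as := L) (by omega) η
    rw [hcon] at hlen
    simp at hlen
  | cons e q ih =>
    intro L
    set m := L.length with hm
    -- rewrite each summand on the RHS
    have key : ∀ k ∈ Finset.range (m + 1),
        G.iint K (e :: q) (L.insertIdx k η)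
          = (∑ i ∈ Finset.range (k + 1),
              G.edgeInt K e (L.take i) * G.iint K q ((L.drop i).insertIdx (k - i) η))
            + (∑ j ∈ Finset.range (m + 1 - k),
              G.edgeInt K e ((L.take (k + j)).insertIdx k η) * G.iint K q (L.drop (k + j))) := by
      intro k hk
      rw [Finset.mem_range] at hk
      have hkm : k ≤ m := by omega
      have hlen : (L.insertIdx k η).length = m + 1 := by
        rw [List.length_insertIdx_of_le_length (i := k) (as := L) (by omega) η]
      show (∑ i ∈ Finset.range ((L.insertIdx k η).length + 1),
        G.edgeInt K e ((L.insertIdx k η).take i) * G.iint K q ((L.insertIdx k η).drop i)) = _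
      rw [hlen]
      have hsplit : m + 1 + 1 = (k + 1) + (m + 1 - k) := by omega
      rw [hsplit, Finset.sum_range_add]
      congr 1
      · apply Finset.sum_congr rfl
        intro i hi
        rw [Finset.mem_range] at hi
        rw [take_insertIdx_of_le η L i k (by omega) (by omega),
            drop_insertIdx_of_le η L i k (by omega) (by omega)]
      · apply Finset.sum_congr rfl
        intro j hj
        rw [Finset.mem_range] at hj
        have h1 : k + 1 + j = (k + j) + 1 := by omega
        rw [h1, take_insertIdx_of_lt η L (k + j) k (by omega) (by omega),
            drop_insertIdx_of_lt η L (k + j) k (by omega) (by omega)]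
    rw [Finset.sum_congr rfl key, Finset.sum_add_distrib]
    -- Part A
    have hA : (∑ k ∈ Finset.range (m + 1), ∑ i ∈ Finset.range (k + 1),
          G.edgeInt K e (L.take i) * G.iint K q ((L.drop i).insertIdx (k - i) η))
        = G.iint K (e :: q) L * G.iint K q [η] := by
      rw [sum_triangle (m + 1)
        (fun k i => G.edgeInt K e (L.take i) * G.iint K q ((L.drop i).insertIdx (k - i) η))]
      simp only [Nat.add_sub_cancel_left]
      have h2 : ∀ i ∈ Finset.range (m + 1),
          (∑ j ∈ Finset.range (m + 1 - i),
            G.edgeInt K e (L.take i) * G.iint K q ((L.drop i).insertIdx j η))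
          = G.edgeInt K e (L.take i) * G.iint K q (L.drop i) * G.iint K q [η] := by
        intro i hi
        rw [Finset.mem_range] at hi
        rw [← Finset.mul_sum]
        have hdl : (L.drop i).length = m - i := by simp [hm]
        have h3 : m + 1 - i = (L.drop i).length + 1 := by omega
        rw [h3, ← ih (L.drop i)]
        ring
      rw [Finset.sum_congr rfl h2]
      show _ = (∑ i ∈ Finset.range (L.length + 1),
        G.edgeInt K e (L.take i) * G.iint K q (L.drop i)) * G.iint K q [η]
      rw [Finset.sum_mul, ← hm]
    -- Part B
    have hB : (∑ k ∈ Finset.range (m + 1), ∑ j ∈ Finset.range (m + 1 - k),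
          G.edgeInt K e ((L.take (k + j)).insertIdx k η) * G.iint K q (L.drop (k + j)))
        = η e * G.iint K (e :: q) L := by
      rw [← sum_triangle (m + 1)
        (fun a b => G.edgeInt K e ((L.take a).insertIdx b η) * G.iint K q (L.drop a))]
      have h2 : ∀ a ∈ Finset.range (m + 1),
          (∑ b ∈ Finset.range (a + 1),
            G.edgeInt K e ((L.take a).insertIdx b η) * G.iint K q (L.drop a))
          = η e * (G.edgeInt K e (L.take a) * G.iint K q (L.drop a)) := by
        intro a ha
        rw [Finset.mem_range] at ha
        have hta : (L.take a).length = a := by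
          rw [List.length_take]; omega
        have h3 : ∀ b ∈ Finset.range (a + 1),
            G.edgeInt K e ((L.take a).insertIdx b η) * G.iint K q (L.drop a)
            = G.edgeInt K e (η :: L.take a) * G.iint K q (L.drop a) := by
          intro b hb
          rw [Finset.mem_range] at hb
          rw [edgeInt_perm G K e (List.perm_insertIdx η (L.take a) (by omega))]
        rw [Finset.sum_congr rfl h3, Finset.sum_const, Finset.card_range, nsmul_eq_mul]
        have h4 := edgeInt_cons G K e η (L.take a)
        rw [hta] at h4
        push_cast
        rw [← mul_assoc, h4]
        ring
      rw [Finset.sum_congr rfl h2, ← Finset.mul_sum]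
      congr 1
    rw [hA, hB, iint_cons_single]
    ring



theorem ofFn_eq_insertIdx {α : Type*} :
    ∀ (n : ℕ) (g : Fin (n + 1) → α) (k : Fin (n + 1)),
      List.ofFn g = (List.ofFn (g ∘ k.succAbove)).insertIdx (k : ℕ) (g k) := by
  intro n
  induction n with
  | zero =>
    intro g k
    have : k = 0 := by omega
    subst this
    simp [List.ofFn_succ]
  | succ n ih =>
    intro g k
    rcases Fin.eq_zero_or_eq_succ k with hk | ⟨k', rfl⟩
    · subst hk
      simp [List.ofFn_succ, Fin.succAbove_zero]
    · rw [List.ofFn_succ]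
      have h0 : (k'.succ.succAbove 0) = 0 := by
        simp [Fin.succAbove_of_castSucc_lt, Fin.castSucc_zero]
      have h1 : List.ofFn (g ∘ k'.succ.succAbove)
          = g 0 :: List.ofFn ((g ∘ Fin.succ) ∘ k'.succAbove) := by
        rw [List.ofFn_succ]
        congr 1
        · congr 1
          funext j
          simp [Function.comp, Fin.succ_succAbove_succ]
      rw [h1]
      have hcoe : ((k'.succ : Fin (n + 2)) : ℕ) = (k' : ℕ) + 1 := rfl
      rw [hcoe, List.insertIdx_succ_cons]
      congr 1
      have h2 := ih (g ∘ Fin.succ) k'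
      simpa using h2

/-- The permutation of `Fin (n+1)` sending `k` to `last` and `k.succAbove j` to
`(σ j).castSucc`. -/
def permIns {n : ℕ} (x : Fin (n + 1) × Equiv.Perm (Fin n)) : Equiv.Perm (Fin (n + 1)) :=
  ((finSuccEquiv' x.1).trans x.2.optionCongr).trans (finSuccEquiv' (Fin.last n)).symm

theorem permIns_fst {n : ℕ} (x : Fin (n + 1) × Equiv.Perm (Fin n)) :
    permIns x x.1 = Fin.last n := by
  simp [permIns, finSuccEquiv'_at]

theorem permIns_succAbove {n : ℕ} (x : Fin (n + 1) × Equiv.Perm (Fin n)) (j : Fin n) :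
    permIns x (x.1.succAbove j) = (x.2 j).castSucc := by
  simp [permIns, finSuccEquiv'_succAbove, finSuccEquiv'_symm_some, Fin.succAbove_last]

theorem permIns_bijective {n : ℕ} : Function.Bijective (permIns (n := n)) := by
  rw [Fintype.bijective_iff_injective_and_card]
  constructor
  · rintro ⟨k, σ⟩ ⟨k', σ'⟩ h
    have hkk : k = k' := by
      by_contra hne
      obtain ⟨j, hj⟩ := Fin.exists_succAbove_eq hne
      have h1 : permIns (k, σ) k = Fin.last n := permIns_fst _
      have h2 : permIns (k', σ') k = (σ' j).castSucc := by
        rw [← hj]; exact permIns_succAbove (k', σ') j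
      rw [h] at h1
      rw [h1] at h2
      exact absurd h2.symm (Fin.ne_last_of_lt (Fin.castSucc_lt_last (σ' j)))
    subst hkk
    have hσ : σ = σ' := by
      apply Equiv.ext
      intro j
      have h1 := permIns_succAbove (k, σ) j
      have h2 := permIns_succAbove (k, σ') j
      rw [h] at h1
      rw [h1] at h2
      exact Fin.castSucc_injective n h2
    rw [hσ]
  · simp [Fintype.card_perm, Nat.factorial_succ]

end SymAux

/-- **Symmetrization relation for combinatorial iterated integrals.**
Let `Γ` be a graph, `K` a field of characteristic zero, `p` a path in `Γ`, and
`η 1, …, η n` tropical `1`-forms on `Γ`.  Then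
`∑ σ ∈ S_n, ∫_p η_{σ(1)} ⋯ η_{σ(n)} = ∏ i, ∫_p η_i`. -/
theorem symmetrization_combinatorial_iterated_integrals
    (G : CombGraph) (K : Type) [Field K] [CharZero K]
    {a b : G.carrier} (p : List G.carrier) (hp : G.IsPath a b p)
    (n : ℕ) (η : Fin n → (G.carrier → K)) (hη : ∀ i, η i ∈ G.Omega1 K) :
    ∑ σ : Equiv.Perm (Fin n), G.iint K p (List.ofFn fun i => η (σ i)) =
      ∏ i : Fin n, G.iint K p [η i] := by
  clear hp hη
  induction n with
  | zero =>
    have h0 : ∀ σ : Equiv.Perm (Fin 0),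
        G.iint K p (List.ofFn ((fun (i : Fin 0) => η (σ i)))) = 1 := by
      intro σ
      rw [List.ofFn_zero, SymAux.iint_nil_forms]
    rw [Finset.sum_congr rfl (fun σ _ => h0 σ)]
    simp
  | succ n ih =>
    have step := Fintype.sum_bijective (SymAux.permIns (n := n))
      SymAux.permIns_bijective
      (fun x => G.iint K p (List.ofFn fun i => η (SymAux.permIns x i)))
      (fun τ => G.iint K p (List.ofFn fun i => η (τ i)))
      (fun x => rfl)
    rw [← step, Fintype.sum_prod_type]
    have hterm : ∀ (k : Fin (n + 1)) (σ : Equiv.Perm (Fin n)),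
        G.iint K p (List.ofFn fun i => η (SymAux.permIns (k, σ) i))
          = G.iint K p ((List.ofFn fun j => η ((σ j).castSucc)).insertIdx (k : ℕ)
              (η (Fin.last n))) := by
      intro k σ
      have hfun : ((fun i => η (SymAux.permIns (k, σ) i)) ∘ k.succAbove)
          = fun j => η ((σ j).castSucc) := by
        funext j
        show η (SymAux.permIns (k, σ) (k.succAbove j)) = _
        rw [SymAux.permIns_succAbove (k, σ) j]
      have hval : η (SymAux.permIns (k, σ) k) = η (Fin.last n) := by
        rw [SymAux.permIns_fst]
      rw [SymAux.ofFn_eq_insertIdx n (fun i => η (SymAux.permIns (k, σ) i)) k, hfun, hval]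
    have hswap : (∑ k : Fin (n + 1), ∑ σ : Equiv.Perm (Fin n),
          G.iint K p (List.ofFn fun i => η (SymAux.permIns (k, σ) i)))
        = ∑ σ : Equiv.Perm (Fin n), ∑ k : Fin (n + 1),
          G.iint K p ((List.ofFn fun j => η ((σ j).castSucc)).insertIdx (k : ℕ)
              (η (Fin.last n))) := by
      rw [Finset.sum_comm]
      exact Finset.sum_congr rfl fun σ _ => Finset.sum_congr rfl fun k _ => hterm k σ
    rw [hswap]
    have hinner : ∀ σ : Equiv.Perm (Fin n),
        (∑ k : Fin (n + 1),
          G.iint K p ((List.ofFn fun j => η ((σ j).castSucc)).insertIdx (k : ℕ)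
              (η (Fin.last n))))
        = G.iint K p (List.ofFn fun j => η ((σ j).castSucc))
            * G.iint K p [η (Fin.last n)] := by
      intro σ
      rw [Fin.sum_univ_eq_sum_range (fun k =>
        G.iint K p ((List.ofFn fun j => η ((σ j).castSucc)).insertIdx k (η (Fin.last n))))]
      have hlen : (List.ofFn fun j => η ((σ j).castSucc)).length = n := by
        simp
      rw [SymAux.shuffle_one G K (η (Fin.last n)) p
        (List.ofFn fun j => η ((σ j).castSucc)), hlen]
    rw [Finset.sum_congr rfl (fun σ _ => hinner σ), ← Finset.sum_mul]
    rw [ih (fun i => η i.castSucc), Fin.prod_univ_castSucc (fun i => G.iint K p [η i])]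
end

section
/- Let Γ be a graph, K a field of characteristic zero, p a path in Γ, and η_1,…,η_{k+ℓ} tropical 1-forms on Γ, where k and ℓ are positive integers. Let Sh(k,ℓ) ⊆ S_{k+ℓ} be the set of (k,ℓ)-shuffles, i.e. permutations σ with σ^{-1}(1) ≤ ⋯ ≤ σ^{-1}(k) and σ^{-1}(k+1) ≤ ⋯ ≤ σ^{-1}(k+ℓ). Then (∫_p η_1⋯η_k)·(∫_p η_{k+1}⋯η_{k+ℓ}) = Σ_{σ ∈ Sh(k,ℓ)} ∫_p η_{σ(1)}⋯η_{σ(k+ℓ)}. -/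
open scoped BigOperators Classical

/-- A `(k,ℓ)`-shuffle: a permutation `σ` of `{1,…,k+ℓ}` such that
`σ⁻¹(1) ≤ ⋯ ≤ σ⁻¹(k)` and `σ⁻¹(k+1) ≤ ⋯ ≤ σ⁻¹(k+ℓ)`. -/
def IsShuffle (k l : ℕ) (σ : Equiv.Perm (Fin (k + l))) : Prop :=
  (∀ i j : Fin (k + l), i ≤ j → (j : ℕ) < k → σ.symm i ≤ σ.symm j) ∧
  (∀ i j : Fin (k + l), k ≤ (i : ℕ) → i ≤ j → σ.symm i ≤ σ.symm j)


set_option linter.unusedSectionVars false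
namespace ShufAux

variable {α : Type*} {M : Type*} [AddCommMonoid M]

def shuffles : List α → List α → List (List α)
  | [], bs => [bs]
  | a :: as, [] => [a :: as]
  | a :: as, b :: bs =>
      ((shuffles as (b :: bs)).map (a :: ·)) ++ ((shuffles (a :: as) bs).map (b :: ·))
  termination_by as bs => as.length + bs.length
  decreasing_by all_goals simp

@[simp] lemma shuffles_nil_left (bs : List α) : shuffles [] bs = [bs] := by
  cases bs <;> simp [shuffles]

@[simp] lemma shuffles_nil_right (as : List α) : shuffles as [] = [as] := by
  cases as <;> simp [shuffles]

lemma shuffles_cons_cons (a b : α) (as bs : List α) :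
    shuffles (a :: as) (b :: bs) =
      ((shuffles as (b :: bs)).map (a :: ·)) ++ ((shuffles (a :: as) bs).map (b :: ·)) := by
  rw [shuffles]

lemma sum_map_add (L : List α) (f g : α → M) :
    (L.map (fun x => f x + g x)).sum = (L.map f).sum + (L.map g).sum := by
  induction L with
  | nil => simp
  | cons x L ih => simp [ih]; abel

lemma cut_shuffles : ∀ (as bs : List α) (F : List α → List α → M),
    ((shuffles as bs).map (fun w =>
        ∑ n ∈ Finset.range (as.length + bs.length + 1), F (w.take n) (w.drop n))).sum
      = ∑ i ∈ Finset.range (as.length + 1), ∑ j ∈ Finset.range (bs.length + 1),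
          ((shuffles (List.take i as) (List.take j bs)).map (fun w₁ =>
            ((shuffles (List.drop i as) (List.drop j bs)).map (fun w₂ => F w₁ w₂)).sum)).sum
  | [], bs, F => by simp
  | a :: as, [], F => by simp
  | a :: as, b :: bs, F => by
      have IH1 := cut_shuffles as (b :: bs) (fun x y => F (a :: x) y)
      have IH2 := cut_shuffles (a :: as) bs (fun x y => F (b :: x) y)
      beta_reduce at IH1 IH2
      -- LHS transformation
      rw [shuffles_cons_cons, List.map_append, List.sum_append, List.map_map, List.map_map]
      have peelA : ((shuffles as (b :: bs)).map ((fun w =>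
            ∑ n ∈ Finset.range ((a :: as).length + (b :: bs).length + 1),
              F (w.take n) (w.drop n)) ∘ (a :: ·))).sum
          = ((shuffles as (b :: bs)).map (fun w' =>
              ∑ m ∈ Finset.range (as.length + (b :: bs).length + 1),
                F (a :: w'.take m) (w'.drop m))).sum
            + ((shuffles as (b :: bs)).map (fun w' => F [] (a :: w'))).sum := by
        rw [← sum_map_add]
        refine congrArg _ (List.map_congr_left fun w' hw' => ?_)
        simp only [Function.comp, List.length_cons]
        rw [show as.length + 1 + (bs.length + 1) + 1 = (as.length + (bs.length + 1) + 1) + 1 by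
          omega, Finset.sum_range_succ']
        simp
      have peelB : ((shuffles (a :: as) bs).map ((fun w =>
            ∑ n ∈ Finset.range ((a :: as).length + (b :: bs).length + 1),
              F (w.take n) (w.drop n)) ∘ (b :: ·))).sum
          = ((shuffles (a :: as) bs).map (fun w' =>
              ∑ m ∈ Finset.range ((a :: as).length + bs.length + 1),
                F (b :: w'.take m) (w'.drop m))).sum
            + ((shuffles (a :: as) bs).map (fun w' => F [] (b :: w'))).sum := by
        rw [← sum_map_add]
        refine congrArg _ (List.map_congr_left fun w' hw' => ?_)
        simp only [Function.comp, List.length_cons]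
        rw [show as.length + 1 + (bs.length + 1) + 1 = (as.length + 1 + bs.length + 1) + 1 by
          omega, Finset.sum_range_succ']
        simp
      rw [peelA, peelB, IH1, IH2]
      simp only [Finset.sum_range_succ', List.take_succ_cons, List.drop_succ_cons,
        List.take_zero, List.drop_zero, shuffles_nil_left, shuffles_nil_right,
        shuffles_cons_cons, List.map_append, List.sum_append, List.map_map, List.map_cons,
        List.map_nil, List.sum_cons, List.sum_nil, add_zero, zero_add, Function.comp,
        List.length_cons, Finset.sum_add_distrib, Function.comp_def]
      abel
  termination_by as bs => as.length + bs.length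
  decreasing_by all_goals simp


lemma perm_of_mem_shuffles : ∀ (as bs w : List α), w ∈ shuffles as bs → w.Perm (as ++ bs)
  | [], bs, w, h => by simp at h; simp [h]
  | a :: as, [], w, h => by simp at h; simp [h, List.Perm.refl]
  | a :: as, b :: bs, w, h => by
      rw [shuffles_cons_cons] at h
      simp only [List.mem_append, List.mem_map] at h
      rcases h with ⟨w', hw', rfl⟩ | ⟨w', hw', rfl⟩
      · exact (perm_of_mem_shuffles _ _ _ hw').cons a
      · exact ((perm_of_mem_shuffles _ _ _ hw').cons b).trans List.perm_middle.symm
  termination_by as bs => as.length + bs.length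
  decreasing_by all_goals simp

lemma length_of_mem_shuffles (as bs w : List α) (h : w ∈ shuffles as bs) :
    w.length = as.length + bs.length := by
  simpa using (perm_of_mem_shuffles as bs w h).length_eq

lemma length_shuffles : ∀ (as bs : List α),
    (shuffles as bs).length = (as.length + bs.length).choose as.length
  | [], bs => by simp
  | a :: as, [] => by simp
  | a :: as, b :: bs => by
      rw [shuffles_cons_cons]
      simp only [List.length_append, List.length_map,
        length_shuffles as (b :: bs), length_shuffles (a :: as) bs]
      simp only [List.length_cons]
      rw [show as.length + 1 + (bs.length + 1) = (as.length + (bs.length + 1)) + 1 by omega,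
        Nat.choose_succ_succ']
      congr 1
      congr 1
      omega
  termination_by as bs => as.length + bs.length
  decreasing_by all_goals simp


variable {K : Type*} [Field K] [CharZero K]

lemma shuffle_prod (f : α → K) (as bs : List α) :
    ((as.map f).prod / (Nat.factorial as.length : K)) * ((bs.map f).prod / (Nat.factorial bs.length : K))
      = ((shuffles as bs).map (fun w => (w.map f).prod / (Nat.factorial w.length : K))).sum := by
  have hconst : ∀ w ∈ shuffles as bs,
      (w.map f).prod / (Nat.factorial w.length : K)
        = ((as ++ bs).map f).prod / (Nat.factorial (as.length + bs.length) : K) := by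
    intro w hw
    rw [((perm_of_mem_shuffles as bs w hw).map f).prod_eq, length_of_mem_shuffles as bs w hw]
  rw [List.map_congr_left hconst, List.map_const', List.sum_replicate, length_shuffles,
    nsmul_eq_mul, List.map_append, List.prod_append]
  have hfact : ((as.length + bs.length).choose as.length : K) * (as.length.factorial : K)
      * (bs.length.factorial : K) = ((as.length + bs.length).factorial : K) := by
    have h := Nat.choose_mul_factorial_mul_factorial (Nat.le_add_right as.length bs.length)
    rw [Nat.add_sub_cancel_left] at h
    exact_mod_cast congrArg (Nat.cast : ℕ → K) h
  have h1 : (as.length.factorial : K) ≠ 0 := Nat.cast_ne_zero.mpr (Nat.factorial_ne_zero _)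
  have h2 : (bs.length.factorial : K) ≠ 0 := Nat.cast_ne_zero.mpr (Nat.factorial_ne_zero _)
  have h3 : ((as.length + bs.length).factorial : K) ≠ 0 :=
    Nat.cast_ne_zero.mpr (Nat.factorial_ne_zero _)
  field_simp
  rw [← hfact]
  ring

end ShufAux

namespace ShufAux

variable {α : Type*} {β : Type*} {M : Type*} [AddCommMonoid M]

lemma mul_sum_map {K : Type*} [NonUnitalNonAssocSemiring K] (c : K) (L : List α) (g : α → K) :
    c * (L.map g).sum = (L.map (fun y => c * g y)).sum := by
  induction L with
  | nil => simp
  | cons x L ih => simp [mul_add, ih]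

lemma sum_map_mul_sum_map {K : Type*} [NonUnitalNonAssocSemiring K] (L : List α) (L' : List β)
    (f : α → K) (g : β → K) :
    (L.map f).sum * (L'.map g).sum
      = (L.map (fun x => (L'.map (fun y => f x * g y)).sum)).sum := by
  induction L with
  | nil => simp
  | cons x L ih => rw [List.map_cons, List.sum_cons, add_mul, ih, List.map_cons,
      List.sum_cons, mul_sum_map]

end ShufAux

namespace CombGraph

open ShufAux

variable (G : CombGraph) (K : Type) [Field K] [CharZero K]

@[simp] lemma iint_nil (ηs : List (G.carrier → K)) :
    G.iint K [] ηs = if ηs.isEmpty then 1 else 0 := by rw [CombGraph.iint]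

lemma iint_cons (e : G.carrier) (p : List G.carrier) (ηs : List (G.carrier → K)) :
    G.iint K (e :: p) ηs = ∑ i ∈ Finset.range (ηs.length + 1),
      G.edgeInt K e (ηs.take i) * G.iint K p (ηs.drop i) := by rw [CombGraph.iint]

lemma edgeInt_shuffle (e : G.carrier) (X Y : List (G.carrier → K)) :
    G.edgeInt K e X * G.edgeInt K e Y = ((shuffles X Y).map (G.edgeInt K e)).sum := by
  simp only [CombGraph.edgeInt]
  have := shuffle_prod (K := K) (fun η => η e) X Y
  exact this

lemma iint_shuffle (p : List G.carrier) (as bs : List (G.carrier → K)) :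
    G.iint K p as * G.iint K p bs = ((shuffles as bs).map (G.iint K p)).sum := by
  induction p generalizing as bs with
  | nil =>
    match as, bs with
    | [], [] => simp
    | a :: as, bs =>
      have hz : ∀ x ∈ (shuffles (a :: as) bs).map (G.iint K []), x = 0 := by
        intro x hx
        simp only [List.mem_map] at hx
        obtain ⟨w, hw, rfl⟩ := hx
        have hlen := length_of_mem_shuffles _ _ _ hw
        match w with
        | [] => exfalso; simp at hlen; try omega
        | c :: w' => simp
      rw [List.sum_eq_zero hz]
      simp
    | [], b :: bs =>
      have hz : ∀ x ∈ (shuffles ([] : List (G.carrier → K)) (b :: bs)).map (G.iint K []),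
          x = 0 := by
        intro x hx
        simp only [List.mem_map] at hx
        obtain ⟨w, hw, rfl⟩ := hx
        have hlen := length_of_mem_shuffles _ _ _ hw
        match w with
        | [] => exfalso; simp at hlen; try omega
        | c :: w' => simp
      rw [List.sum_eq_zero hz]
      simp
  | cons e q ih =>
    rw [iint_cons, iint_cons, Finset.sum_mul_sum]
    have step1 : ∀ i ∈ Finset.range (as.length + 1), ∀ j ∈ Finset.range (bs.length + 1),
        (G.edgeInt K e (as.take i) * G.iint K q (as.drop i))
          * (G.edgeInt K e (bs.take j) * G.iint K q (bs.drop j))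
        = ((shuffles (List.take i as) (List.take j bs)).map (fun w₁ =>
            ((shuffles (List.drop i as) (List.drop j bs)).map (fun w₂ =>
              (fun x y => G.edgeInt K e x * G.iint K q y) w₁ w₂)).sum)).sum := by
      intro i _ j _
      rw [mul_mul_mul_comm, edgeInt_shuffle, ih, sum_map_mul_sum_map]
    rw [Finset.sum_congr rfl (fun i hi => Finset.sum_congr rfl (fun j hj => step1 i hi j hj)),
      ← cut_shuffles as bs (fun x y => G.edgeInt K e x * G.iint K q y)]
    refine congrArg _ (List.map_congr_left fun w hw => ?_)
    rw [iint_cons, length_of_mem_shuffles _ _ _ hw]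

end CombGraph

namespace ShufAux

open Equiv

variable {α : Type*} {N : Type*} [AddCommMonoid N]

lemma sum_map_shuffles_comm : ∀ (X Y : List α) (φ : List α → N),
    ((shuffles X Y).map φ).sum = ((shuffles Y X).map φ).sum
  | [], Y, φ => by simp
  | x :: X, [], φ => by simp
  | x :: X, y :: Y, φ => by
      rw [shuffles_cons_cons, shuffles_cons_cons y x, List.map_append, List.map_append,
        List.sum_append, List.sum_append, List.map_map, List.map_map, List.map_map, List.map_map,
        sum_map_shuffles_comm X (y :: Y) (φ ∘ (x :: ·)),
        sum_map_shuffles_comm (x :: X) Y (φ ∘ (y :: ·))]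
      exact add_comm _ _
  termination_by X Y => X.length + Y.length
  decreasing_by all_goals simp

lemma ofFn_index_cast {m n : ℕ} (h : m = n) (f : Fin n → α) (g : Fin m → α)
    (hfg : ∀ x : Fin m, g x = f ⟨x.1, by omega⟩) : List.ofFn g = List.ofFn f := by
  subst h
  exact congrArg List.ofFn (funext fun x => (hfg x).trans (congrArg f (Fin.ext rfl)))

lemma ofFn_eq_cons {m n : ℕ} (h : m = n + 1) (f : Fin m → α) :
    List.ofFn f = f ⟨0, by omega⟩ :: List.ofFn (fun t : Fin n => f ⟨t.1 + 1, by omega⟩) := by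
  subst h
  exact List.ofFn_succ

lemma shuffle_zero_cases {k l : ℕ} (hk : 0 < k) (σ : Perm (Fin (k + l)))
    (hσ : IsShuffle k l σ) (hl : 0 < l) :
    σ ⟨0, by omega⟩ = ⟨0, by omega⟩ ∨ σ ⟨0, by omega⟩ = ⟨k, by omega⟩ := by
  by_cases hv : ((σ ⟨0, by omega⟩ : Fin (k + l)) : ℕ) < k
  · left
    have h1 : σ.symm ⟨0, by omega⟩ ≤ σ.symm (σ ⟨0, by omega⟩) :=
      hσ.1 _ _ (by simp [Fin.le_def]) hv
    rw [Equiv.symm_apply_apply] at h1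
    have h0 : σ.symm ⟨0, by omega⟩ = ⟨0, by omega⟩ :=
      le_antisymm h1 (by simp [Fin.le_def])
    exact ((Equiv.symm_apply_eq σ).1 h0).symm
  · right
    have h1 : σ.symm ⟨k, by omega⟩ ≤ σ.symm (σ ⟨0, by omega⟩) :=
      hσ.2 _ _ (le_refl _) (by simp only [Fin.le_def]; omega)
    rw [Equiv.symm_apply_apply] at h1
    have h0 : σ.symm ⟨k, by omega⟩ = ⟨0, by omega⟩ :=
      le_antisymm h1 (by simp [Fin.le_def])
    exact ((Equiv.symm_apply_eq σ).1 h0).symm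

/-- Extend a permutation of `Fin (k'+l)` to one of `Fin (k'+1+l)` fixing `0`. -/
def upPerm (k' l : ℕ) (σ' : Perm (Fin (k' + l))) : Perm (Fin (k' + 1 + l)) :=
  ((finCongr (show k' + 1 + l = (k' + l) + 1 by omega)).permCongr).symm
    (Perm.decomposeFin.symm (0, σ'))

def downPerm (k' l : ℕ) (σ : Perm (Fin (k' + 1 + l))) : Perm (Fin (k' + l)) :=
  (Perm.decomposeFin
    ((finCongr (show k' + 1 + l = (k' + l) + 1 by omega)).permCongr σ)).2

lemma upPerm_zero (k' l : ℕ) (σ' : Perm (Fin (k' + l))) :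
    upPerm k' l σ' ⟨0, by omega⟩ = ⟨0, by omega⟩ := by
  rw [upPerm, Equiv.permCongr_symm, Equiv.permCongr_apply, Equiv.symm_symm,
    show (finCongr (show k' + 1 + l = (k' + l) + 1 by omega)) ⟨0, by omega⟩
      = (0 : Fin ((k' + l) + 1)) from Fin.ext (by simp),
    Perm.decomposeFin_symm_apply_zero]
  exact Fin.ext (by simp)

lemma upPerm_succ (k' l : ℕ) (σ' : Perm (Fin (k' + l))) (t : Fin (k' + l)) :
    upPerm k' l σ' ⟨t.1 + 1, by omega⟩ = ⟨(σ' t).1 + 1, by omega⟩ := by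
  rw [upPerm, Equiv.permCongr_symm, Equiv.permCongr_apply, Equiv.symm_symm,
    show (finCongr (show k' + 1 + l = (k' + l) + 1 by omega)) ⟨t.1 + 1, by omega⟩
      = Fin.succ t from Fin.ext (by simp),
    Perm.decomposeFin_symm_apply_succ, Equiv.swap_self, Equiv.refl_apply]
  exact Fin.ext (by simp)

lemma upPerm_symm_zero (k' l : ℕ) (σ' : Perm (Fin (k' + l))) :
    (upPerm k' l σ').symm ⟨0, by omega⟩ = ⟨0, by omega⟩ :=
  (Equiv.symm_apply_eq _).2 (upPerm_zero k' l σ').symm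

lemma upPerm_symm_succ (k' l : ℕ) (σ' : Perm (Fin (k' + l))) (u : Fin (k' + l)) :
    (upPerm k' l σ').symm ⟨u.1 + 1, by omega⟩ = ⟨(σ'.symm u).1 + 1, by omega⟩ :=
  (Equiv.symm_apply_eq _).2 (by rw [upPerm_succ]; simp)

lemma upPerm_symm_val_zero (k' l : ℕ) (σ' : Perm (Fin (k' + l)))
    (x : Fin (k' + 1 + l)) (hx : x.1 = 0) : ((upPerm k' l σ').symm x).1 = 0 := by
  have hxe : x = (⟨0, by omega⟩ : Fin (k' + 1 + l)) := Fin.ext hx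
  rw [hxe, upPerm_symm_zero]

lemma upPerm_symm_val_pos (k' l : ℕ) (σ' : Perm (Fin (k' + l)))
    (x : Fin (k' + 1 + l)) (hx : 0 < x.1) (u : Fin (k' + l)) (hu : u.1 = x.1 - 1) :
    ((upPerm k' l σ').symm x).1 = (σ'.symm u).1 + 1 := by
  have hxe : x = (⟨u.1 + 1, by omega⟩ : Fin (k' + 1 + l)) := Fin.ext (by simp; omega)
  rw [hxe, upPerm_symm_succ]

lemma isShuffle_upPerm_iff (k' l : ℕ) (σ' : Perm (Fin (k' + l))) :
    IsShuffle (k' + 1) l (upPerm k' l σ') ↔ IsShuffle k' l σ' := by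
  constructor
  · intro h
    constructor
    · intro i j hij hjk
      have hij' := Fin.le_def.1 hij
      have H := h.1 ⟨i.1 + 1, by omega⟩ ⟨j.1 + 1, by omega⟩ (Fin.le_def.2 (by simp; omega))
        (by simp; omega)
      rw [Fin.le_def, upPerm_symm_val_pos k' l σ' _ (by simp) i (by simp),
        upPerm_symm_val_pos k' l σ' _ (by simp) j (by simp)] at H
      exact Fin.le_def.2 (by omega)
    · intro i j hki hij
      have hij' := Fin.le_def.1 hij
      have H := h.2 ⟨i.1 + 1, by omega⟩ ⟨j.1 + 1, by omega⟩ (by simp; omega)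
        (Fin.le_def.2 (by simp; omega))
      rw [Fin.le_def, upPerm_symm_val_pos k' l σ' _ (by simp) i (by simp),
        upPerm_symm_val_pos k' l σ' _ (by simp) j (by simp)] at H
      exact Fin.le_def.2 (by omega)
  · intro h
    constructor
    · intro i j hij hjk
      have hij' := Fin.le_def.1 hij
      rw [Fin.le_def]
      rcases Nat.eq_zero_or_pos i.1 with hi0 | hipos
      · rw [upPerm_symm_val_zero k' l σ' i hi0]
        exact Nat.zero_le _
      · rw [upPerm_symm_val_pos k' l σ' i hipos ⟨i.1 - 1, by omega⟩ rfl,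
          upPerm_symm_val_pos k' l σ' j (by omega) ⟨j.1 - 1, by omega⟩ rfl]
        have H := h.1 ⟨i.1 - 1, by omega⟩ ⟨j.1 - 1, by omega⟩ (Fin.le_def.2 (by simp; omega))
          (by simp; omega)
        have := Fin.le_def.1 H
        omega
    · intro i j hki hij
      have hij' := Fin.le_def.1 hij
      rw [Fin.le_def]
      rw [upPerm_symm_val_pos k' l σ' i (by omega) ⟨i.1 - 1, by omega⟩ rfl,
        upPerm_symm_val_pos k' l σ' j (by omega) ⟨j.1 - 1, by omega⟩ rfl]
      have H := h.2 ⟨i.1 - 1, by omega⟩ ⟨j.1 - 1, by omega⟩ (by simp; omega)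
        (Fin.le_def.2 (by simp; omega))
      have := Fin.le_def.1 H
      omega

lemma downPerm_upPerm (k' l : ℕ) (σ' : Perm (Fin (k' + l))) :
    downPerm k' l (upPerm k' l σ') = σ' := by
  rw [downPerm, upPerm, Equiv.apply_symm_apply, Equiv.apply_symm_apply]

lemma upPerm_downPerm (k' l : ℕ) (σ : Perm (Fin (k' + 1 + l)))
    (hσ0 : σ ⟨0, by omega⟩ = ⟨0, by omega⟩) :
    upPerm k' l (downPerm k' l σ) = σ := by
  set E := (finCongr (show k' + 1 + l = (k' + l) + 1 by omega)).permCongr with hE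
  have hx : (E σ) 0 = 0 := by
    rw [hE, Equiv.permCongr_apply]
    have h1 : (finCongr (show k' + 1 + l = (k' + l) + 1 by omega)).symm
        (0 : Fin ((k' + l) + 1)) = ⟨0, by omega⟩ := by apply Fin.ext; simp
    rw [h1, hσ0]
    apply Fin.ext; simp
  have hfst : (Perm.decomposeFin (E σ)).1 = 0 := by
    have h2 : Perm.decomposeFin.symm (Perm.decomposeFin (E σ)) 0
        = (Perm.decomposeFin (E σ)).1 := by
      rw [← Prod.mk.eta (p := Perm.decomposeFin (E σ))]
      exact Perm.decomposeFin_symm_apply_zero _ _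
    rw [Equiv.symm_apply_apply] at h2
    rw [← h2, hx]
  rw [upPerm, downPerm, ← hfst, ← hE, Prod.mk.eta, Equiv.symm_apply_apply]
  exact Equiv.symm_apply_apply E σ

lemma sum_classA (k' l : ℕ) (c : Fin (k' + 1 + l) → α) (φ : List α → N) :
    ∑ σ ∈ Finset.univ.filter (fun σ : Perm (Fin (k' + 1 + l)) =>
        IsShuffle (k' + 1) l σ ∧ σ ⟨0, by omega⟩ = ⟨0, by omega⟩),
      φ (List.ofFn fun t => c (σ t))
    = ∑ σ' ∈ Finset.univ.filter (fun σ' : Perm (Fin (k' + l)) => IsShuffle k' l σ'),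
      φ (c ⟨0, by omega⟩ :: List.ofFn fun t : Fin (k' + l) => c ⟨(σ' t).1 + 1, by omega⟩) := by
  classical
  refine Finset.sum_nbij' (downPerm k' l) (upPerm k' l) ?_ ?_ ?_ ?_ ?_
  · intro σ hσ
    simp only [Finset.mem_filter, Finset.mem_univ, true_and] at hσ ⊢
    rw [← isShuffle_upPerm_iff, upPerm_downPerm k' l σ hσ.2]
    exact hσ.1
  · intro σ' hσ'
    simp only [Finset.mem_filter, Finset.mem_univ, true_and] at hσ' ⊢
    exact ⟨(isShuffle_upPerm_iff k' l σ').2 hσ', upPerm_zero k' l σ'⟩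
  · intro σ hσ
    simp only [Finset.mem_filter, Finset.mem_univ, true_and] at hσ
    exact upPerm_downPerm k' l σ hσ.2
  · intro σ' _
    exact downPerm_upPerm k' l σ'
  · intro σ hσ
    simp only [Finset.mem_filter, Finset.mem_univ, true_and] at hσ
    rw [← upPerm_downPerm k' l σ hσ.2,
      ofFn_eq_cons (show k' + 1 + l = (k' + l) + 1 by omega)]
    beta_reduce
    rw [upPerm_zero]
    refine congrArg φ (congrArg _ (congrArg List.ofFn (funext fun t => ?_)))
    rw [upPerm_succ, downPerm_upPerm]

end ShufAux
namespace ShufAux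

open Equiv

variable {α : Type*} {N : Type*} [AddCommMonoid N]

lemma flip_val_left {m n : ℕ} (i : Fin (m + n)) (h : i.1 < m) :
    ((finAddFlip (m := m) (n := n)) i).1 = n + i.1 := by
  conv_lhs => rw [show i = (⟨i.1, i.2⟩ : Fin (m + n)) from Fin.ext rfl,
    finAddFlip_apply_mk_left h]

lemma flip_val_right {m n : ℕ} (i : Fin (m + n)) (h : m ≤ i.1) :
    ((finAddFlip (m := m) (n := n)) i).1 = i.1 - m := by
  conv_lhs => rw [show i = (⟨i.1, i.2⟩ : Fin (m + n)) from Fin.ext rfl,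
    finAddFlip_apply_mk_right h]

lemma finAddFlip_finAddFlip {m n : ℕ} (x : Fin (m + n)) :
    finAddFlip (finAddFlip x) = x := by
  apply Fin.ext
  rcases Nat.lt_or_ge x.1 m with h | h
  · rw [show (finAddFlip (finAddFlip x)).1
        = ((finAddFlip (m := n) (n := m)) (finAddFlip x)).1 from rfl,
      flip_val_right _ (by rw [flip_val_left x h]; omega), flip_val_left x h]
    omega
  · rw [show (finAddFlip (finAddFlip x)).1
        = ((finAddFlip (m := n) (n := m)) (finAddFlip x)).1 from rfl,
      flip_val_left _ (by rw [flip_val_right x h]; omega), flip_val_right x h]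
    omega

lemma finAddFlip_symm_apply {m n : ℕ} (y : Fin (n + m)) :
    (finAddFlip (m := m) (n := n)).symm y = finAddFlip y :=
  (Equiv.symm_apply_eq _).2 (finAddFlip_finAddFlip y).symm

def swapPerm (k l : ℕ) (σ : Perm (Fin (k + l))) : Perm (Fin (l + k)) :=
  ((finCongr (show l + k = k + l by omega)).trans σ).trans
    (finAddFlip (m := l) (n := k)).symm

lemma swapPerm_apply (k l : ℕ) (σ : Perm (Fin (k + l))) (t : Fin (l + k)) :
    swapPerm k l σ t = finAddFlip (σ (finCongr (show l + k = k + l by omega) t)) := by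
  rw [swapPerm, Equiv.trans_apply, Equiv.trans_apply, finAddFlip_symm_apply]

lemma swapPerm_symm_val (k l : ℕ) (σ : Perm (Fin (k + l))) (y : Fin (l + k)) :
    ((swapPerm k l σ).symm y).1 = (σ.symm (finAddFlip y)).1 := by
  rw [swapPerm, Equiv.symm_trans_apply, Equiv.symm_trans_apply, Equiv.symm_symm]
  simp

lemma swapPerm_swapPerm (k l : ℕ) (σ : Perm (Fin (k + l))) :
    swapPerm l k (swapPerm k l σ) = σ := by
  refine Equiv.ext fun x => ?_
  rw [swapPerm_apply, swapPerm_apply, finAddFlip_finAddFlip]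
  exact congrArg (fun z => σ z) (Fin.ext (by simp))

lemma sum_classB_swap (k l : ℕ) (hk : 0 < k) (hl : 0 < l) (c : Fin (k + l) → α)
    (φ : List α → N) :
    ∑ σ ∈ Finset.univ.filter (fun σ : Perm (Fin (k + l)) =>
        IsShuffle k l σ ∧ σ ⟨0, by omega⟩ = ⟨k, by omega⟩),
      φ (List.ofFn fun t => c (σ t))
    = ∑ τ ∈ Finset.univ.filter (fun τ : Perm (Fin (l + k)) =>
        IsShuffle l k τ ∧ τ ⟨0, by omega⟩ = ⟨0, by omega⟩),
      φ (List.ofFn fun t => c (finAddFlip (τ t))) := by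
  classical
  have hfwd : ∀ σ : Perm (Fin (k + l)), IsShuffle k l σ → σ ⟨0, by omega⟩ = ⟨k, by omega⟩ →
      IsShuffle l k (swapPerm k l σ) ∧ swapPerm k l σ ⟨0, by omega⟩ = ⟨0, by omega⟩ := by
    intro σ hσ hσ0
    refine ⟨⟨?_, ?_⟩, ?_⟩
    · intro i j hij hjl
      have hij' := Fin.le_def.1 hij
      rw [Fin.le_def, swapPerm_symm_val, swapPerm_symm_val]
      have hfi : ((finAddFlip (m := l) (n := k)) i).1 = k + i.1 :=
        flip_val_left i (by omega)
      have hfj : ((finAddFlip (m := l) (n := k)) j).1 = k + j.1 :=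
        flip_val_left j (by omega)
      exact Fin.le_def.1 (hσ.2 _ _ (by omega) (Fin.le_def.2 (by omega)))
    · intro i j hli hij
      have hij' := Fin.le_def.1 hij
      rw [Fin.le_def, swapPerm_symm_val, swapPerm_symm_val]
      have hfi : ((finAddFlip (m := l) (n := k)) i).1 = i.1 - l :=
        flip_val_right i (by omega)
      have hfj : ((finAddFlip (m := l) (n := k)) j).1 = j.1 - l :=
        flip_val_right j (by omega)
      exact Fin.le_def.1 (hσ.1 _ _ (Fin.le_def.2 (by omega)) (by omega))
    · rw [swapPerm_apply,
        show (finCongr (show l + k = k + l by omega) ⟨0, by omega⟩ : Fin (k + l))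
          = ⟨0, by omega⟩ from Fin.ext (by simp), hσ0,
        finAddFlip_apply_mk_right (le_refl k)]
      exact Fin.ext (by simp)
  have hbwd : ∀ τ : Perm (Fin (l + k)), IsShuffle l k τ → τ ⟨0, by omega⟩ = ⟨0, by omega⟩ →
      IsShuffle k l (swapPerm l k τ) ∧ swapPerm l k τ ⟨0, by omega⟩ = ⟨k, by omega⟩ := by
    intro τ hτ hτ0
    refine ⟨⟨?_, ?_⟩, ?_⟩
    · intro i j hij hjk
      have hij' := Fin.le_def.1 hij
      rw [Fin.le_def, swapPerm_symm_val, swapPerm_symm_val]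
      have hfi : ((finAddFlip (m := k) (n := l)) i).1 = l + i.1 :=
        flip_val_left i (by omega)
      have hfj : ((finAddFlip (m := k) (n := l)) j).1 = l + j.1 :=
        flip_val_left j (by omega)
      exact Fin.le_def.1 (hτ.2 _ _ (by omega) (Fin.le_def.2 (by omega)))
    · intro i j hki hij
      have hij' := Fin.le_def.1 hij
      rw [Fin.le_def, swapPerm_symm_val, swapPerm_symm_val]
      have hfi : ((finAddFlip (m := k) (n := l)) i).1 = i.1 - k :=
        flip_val_right i (by omega)
      have hfj : ((finAddFlip (m := k) (n := l)) j).1 = j.1 - k :=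
        flip_val_right j (by omega)
      exact Fin.le_def.1 (hτ.1 _ _ (Fin.le_def.2 (by omega)) (by omega))
    · rw [swapPerm_apply,
        show (finCongr (show k + l = l + k by omega) ⟨0, by omega⟩ : Fin (l + k))
          = ⟨0, by omega⟩ from Fin.ext (by simp), hτ0]
      rw [show (⟨0, by omega⟩ : Fin (l + k)) = (⟨0, by omega⟩ : Fin (l + k)) from rfl]
      rw [show (finAddFlip (⟨0, by omega⟩ : Fin (l + k)) : Fin (k + l))
          = ⟨k + 0, by omega⟩ from finAddFlip_apply_mk_left (by omega)]
      exact Fin.ext (by simp)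
  refine Finset.sum_nbij' (swapPerm k l) (swapPerm l k) ?_ ?_ ?_ ?_ ?_
  · intro σ hσ
    simp only [Finset.mem_filter, Finset.mem_univ, true_and] at hσ ⊢
    exact hfwd σ hσ.1 hσ.2
  · intro τ hτ
    simp only [Finset.mem_filter, Finset.mem_univ, true_and] at hτ ⊢
    exact hbwd τ hτ.1 hτ.2
  · intro σ _
    exact swapPerm_swapPerm k l σ
  · intro τ _
    exact swapPerm_swapPerm l k τ
  · intro σ _
    refine congrArg φ ?_
    refine (ofFn_index_cast (show l + k = k + l by omega) _ _ fun x => ?_).symm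
    rw [swapPerm_apply, finAddFlip_finAddFlip]
    exact congrArg (fun z => c (σ z)) (Fin.ext (by simp))

end ShufAux
namespace ShufAux

open Equiv

variable {α : Type*} {N : Type*} [AddCommMonoid N]

lemma transfer : ∀ (n : ℕ), ∀ (k l : ℕ), k + l = n → ∀ (c : Fin (k + l) → α) (φ : List α → N),
    (∑ σ ∈ Finset.univ.filter (fun σ : Perm (Fin (k + l)) => IsShuffle k l σ),
      φ (List.ofFn fun t => c (σ t)))
    = ((shuffles (List.ofFn fun t : Fin k => c (Fin.castAdd l t))
        (List.ofFn fun t : Fin l => c (Fin.natAdd k t))).map φ).sum := by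
  intro n
  induction n using Nat.strong_induction_on with
  | _ n ih =>
    intro k l hn c φ
    match k, l with
    | 0, l =>
      have hfil : Finset.univ.filter (fun σ : Perm (Fin (0 + l)) => IsShuffle 0 l σ)
          = {1} := by
        ext σ
        simp only [Finset.mem_filter, Finset.mem_univ, true_and, Finset.mem_singleton]
        constructor
        · intro hσ
          have mono : Monotone ⇑σ.symm := fun i j hij => hσ.2 i j (Nat.zero_le _) hij
          have sm : StrictMono ⇑σ.symm := mono.strictMono_of_injective σ.symm.injective
          have hid : ⇑σ.symm = id :=
            (StrictMono.range_inj sm strictMono_id).1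
              (by rw [Equiv.range_eq_univ, Set.range_id])
          have hsymm : σ.symm = 1 := Equiv.ext fun x => congrFun hid x
          have h2 : σ = σ.symm.symm := (Equiv.symm_symm σ).symm
          rw [h2, hsymm]
          rfl
        · rintro rfl
          exact ⟨fun i j hij hj => absurd hj (by omega), fun i j _ hij => hij⟩
      rw [hfil, Finset.sum_singleton,
        show (List.ofFn fun t : Fin 0 => c (Fin.castAdd l t)) = ([] : List α) from
          List.ofFn_zero, shuffles_nil_left]
      simp only [List.map_cons, List.map_nil, List.sum_cons, List.sum_nil, add_zero]
      refine congrArg φ ?_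
      exact (ofFn_index_cast (show l = 0 + l by omega) _ _ fun x =>
        congrArg c (Fin.ext (by simp))).symm
    | k' + 1, 0 =>
      have hfil : Finset.univ.filter
          (fun σ : Perm (Fin (k' + 1 + 0)) => IsShuffle (k' + 1) 0 σ) = {1} := by
        ext σ
        simp only [Finset.mem_filter, Finset.mem_univ, true_and, Finset.mem_singleton]
        constructor
        · intro hσ
          have mono : Monotone ⇑σ.symm := fun i j hij => hσ.1 i j hij (by omega)
          have sm : StrictMono ⇑σ.symm := mono.strictMono_of_injective σ.symm.injective
          have hid : ⇑σ.symm = id :=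
            (StrictMono.range_inj sm strictMono_id).1
              (by rw [Equiv.range_eq_univ, Set.range_id])
          have hsymm : σ.symm = 1 := Equiv.ext fun x => congrFun hid x
          have h2 : σ = σ.symm.symm := (Equiv.symm_symm σ).symm
          rw [h2, hsymm]
          rfl
        · rintro rfl
          exact ⟨fun i j hij hj => hij, fun i j _ hij => hij⟩
      rw [hfil, Finset.sum_singleton,
        show (List.ofFn fun t : Fin 0 => c (Fin.natAdd (k' + 1) t)) = ([] : List α) from
          List.ofFn_zero, shuffles_nil_right]
      simp only [List.map_cons, List.map_nil, List.sum_cons, List.sum_nil, add_zero]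
      refine congrArg φ ?_
      exact (ofFn_index_cast (show k' + 1 = k' + 1 + 0 by omega) _ _ fun x =>
        congrArg c (Fin.ext (by simp))).symm
    | k' + 1, l' + 1 =>
      classical
      -- abbreviations
      set a : α := c ⟨0, by omega⟩ with ha
      set b : α := c ⟨k' + 1, by omega⟩ with hb
      -- split the sum according to σ 0
      have hsplit := Finset.sum_filter_add_sum_filter_not
        (Finset.univ.filter (fun σ : Perm (Fin (k' + 1 + (l' + 1))) =>
          IsShuffle (k' + 1) (l' + 1) σ))
        (fun σ => σ ⟨0, by omega⟩ = ⟨0, by omega⟩)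
        (fun σ => φ (List.ofFn fun t => c (σ t)))
      rw [← hsplit, Finset.filter_filter, Finset.filter_filter]
      have hBfil : Finset.univ.filter (fun σ : Perm (Fin (k' + 1 + (l' + 1))) =>
            IsShuffle (k' + 1) (l' + 1) σ ∧ ¬(σ ⟨0, by omega⟩ = ⟨0, by omega⟩))
          = Finset.univ.filter (fun σ : Perm (Fin (k' + 1 + (l' + 1))) =>
            IsShuffle (k' + 1) (l' + 1) σ ∧ σ ⟨0, by omega⟩ = ⟨k' + 1, by omega⟩) := by
        apply Finset.filter_congr
        intro σ _
        constructor
        · rintro ⟨hs, hne⟩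
          exact ⟨hs, (shuffle_zero_cases (by omega) σ hs (by omega)).resolve_left hne⟩
        · rintro ⟨hs, heq⟩
          refine ⟨hs, fun hcon => ?_⟩
          have h2 := congrArg Fin.val (heq.symm.trans hcon)
          simp at h2
      rw [hBfil]
      -- class A
      have ihA := ih (k' + (l' + 1)) (by omega) k' (l' + 1) rfl
        (fun u : Fin (k' + (l' + 1)) => c ⟨u.1 + 1, by omega⟩)
        (fun w => φ (a :: w))
      beta_reduce at ihA
      have hclassA := sum_classA k' (l' + 1) c (φ := φ)
      rw [← ha] at hclassA
      rw [hclassA, ihA]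
      -- class B
      have hswap := sum_classB_swap (k' + 1) (l' + 1) (by omega) (by omega) c φ
      rw [hswap]
      have hclassB := sum_classA l' (k' + 1) (fun x => c (finAddFlip x)) (φ := φ)
      beta_reduce at hclassB
      rw [hclassB]
      have ihB := ih (l' + (k' + 1)) (by omega) l' (k' + 1) rfl
        (fun u : Fin (l' + (k' + 1)) => c (finAddFlip (⟨u.1 + 1, by omega⟩ : Fin (l' + 1 + (k' + 1)))))
        (fun w => φ (c (finAddFlip (⟨0, by omega⟩ : Fin (l' + 1 + (k' + 1)))) :: w))
      beta_reduce at ihB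
      rw [ihB]
      -- list identifications
      have hA : (List.ofFn fun t : Fin (k' + 1) => c (Fin.castAdd (l' + 1) t))
          = a :: (List.ofFn fun t : Fin k' =>
              c ⟨(Fin.castAdd (l' + 1) t).1 + 1, by omega⟩) := by
        rw [ha, List.ofFn_succ]
        congr 1
      have hBc : (List.ofFn fun t : Fin (l' + 1) => c (Fin.natAdd (k' + 1) t))
          = b :: (List.ofFn fun t : Fin l' => c (Fin.natAdd (k' + 1) t.succ)) := by
        rw [hb, List.ofFn_succ]
        congr 1
      have hB'B : (List.ofFn fun t : Fin (l' + 1) => c ⟨(Fin.natAdd k' t).1 + 1, by omega⟩)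
          = (List.ofFn fun t : Fin (l' + 1) => c (Fin.natAdd (k' + 1) t)) :=
        congrArg List.ofFn (funext fun t => congrArg c (Fin.ext (by simp; omega)))
      have hflip0 : c (finAddFlip (⟨0, by omega⟩ : Fin (l' + 1 + (k' + 1)))) = b := by
        rw [hb]
        refine congrArg c (Fin.ext ?_)
        rw [flip_val_left _ (by simp)]
        simp
      have hB2 : (List.ofFn fun t : Fin l' => c (finAddFlip
            (⟨(Fin.castAdd (k' + 1) t).1 + 1, by omega⟩ : Fin (l' + 1 + (k' + 1)))))
          = (List.ofFn fun t : Fin l' => c (Fin.natAdd (k' + 1) t.succ)) := by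
        refine congrArg List.ofFn (funext fun t => congrArg c (Fin.ext ?_))
        rw [flip_val_left _ (by simp)]
        simp
      have hA2 : (List.ofFn fun t : Fin (k' + 1) => c (finAddFlip
            (⟨(Fin.natAdd l' t).1 + 1, by omega⟩ : Fin (l' + 1 + (k' + 1)))))
          = (List.ofFn fun t : Fin (k' + 1) => c (Fin.castAdd (l' + 1) t)) := by
        refine congrArg List.ofFn (funext fun t => congrArg c (Fin.ext ?_))
        rw [flip_val_right _ (by simp)]
        simp
      rw [hB'B, hflip0, hB2, hA2,
        sum_map_shuffles_comm (List.ofFn fun t : Fin l' => c (Fin.natAdd (k' + 1) t.succ))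
          (List.ofFn fun t : Fin (k' + 1) => c (Fin.castAdd (l' + 1) t)) (fun w => φ (b :: w)),
        hA, hBc, shuffles_cons_cons, List.map_append, List.sum_append, List.map_map,
        List.map_map]
      simp only [Function.comp_def]

end ShufAux

/-- **The shuffle formula for combinatorial iterated integrals.**
For a path `p` in a graph `Γ`, tropical `1`-forms `η 1, …, η (k+ℓ)` (`k, ℓ > 0`):
`(∫_p η_1 ⋯ η_k) (∫_p η_{k+1} ⋯ η_{k+ℓ}) = ∑_{σ ∈ Sh(k,ℓ)} ∫_p η_{σ(1)} ⋯ η_{σ(k+ℓ)}`. -/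
theorem shuffle_formula_combinatorial_iterated_integrals
    (G : CombGraph) (K : Type) [Field K] [CharZero K]
    {a b : G.carrier} (p : List G.carrier) (hp : G.IsPath a b p)
    (k l : ℕ) (hk : 0 < k) (hl : 0 < l)
    (η : Fin (k + l) → (G.carrier → K)) (hη : ∀ i, η i ∈ G.Omega1 K) :
    (G.iint K p (List.ofFn fun t : Fin k => η (Fin.castAdd l t))) *
      (G.iint K p (List.ofFn fun t : Fin l => η (Fin.natAdd k t))) =
    ∑ σ ∈ Finset.univ.filter (fun σ : Equiv.Perm (Fin (k + l)) => IsShuffle k l σ),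
      G.iint K p (List.ofFn fun t => η (σ t)) := by
  rw [CombGraph.iint_shuffle]
  exact (ShufAux.transfer (k + l) k l rfl η (G.iint K p)).symm
end

section
/- Let Γ be a graph and K a field of characteristic zero. Combinatorial iterated integrals are invariant under elementary homotopy of paths: if p_1 is a path ending at a vertex v (or p_1 is empty and v is the chosen initial vertex), p_2 is a path starting at v, and e is a closed directed edge with i(e) = v, then for all n ≥ 0 and all tropical 1-forms η_1,…,η_n on Γ, ∫_{p_1·(e,ē)·p_2} η_1⋯η_n = ∫_{p_1·p_2} η_1⋯η_n, where p_1·(e,ē)·p_2 denotes the path obtained by inserting the backtrack e, ē between p_1 and p_2. Consequently, combinatorial iterated integration descends to homotopy classes of paths. -/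
open scoped BigOperators Classical

namespace CombGraph

variable (G : CombGraph)

variable (K : Type) [Field K]

/-- Elementary homotopy of edge lists: insertion of a backtrack `e, ē`. -/
inductive ElemHomotopy (G : CombGraph) : List G.carrier → List G.carrier → Prop
  | insert (p₁ p₂ : List G.carrier) (e : G.carrier) (he : G.IsClosedDir e) :
      ElemHomotopy G (p₁ ++ p₂) (p₁ ++ e :: G.inv e :: p₂)

/-- The type of paths from `a` to `b`. -/
def PathIn (a b : G.carrier) := {p : List G.carrier // G.IsPath a b p}

/-- The relation on paths whose generated equivalence relation is homotopy of paths. -/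
def PathRel (a b : G.carrier) (p q : G.PathIn a b) : Prop := ElemHomotopy G p.1 q.1

/-- Homotopy classes of paths from `a` to `b`. -/
def Pi1 (a b : G.carrier) := Quot (G.PathRel a b)

end CombGraph


section Aux
open Finset

variable (G : CombGraph) (K : Type) [Field K] [CharZero K]

lemma CombGraph.pair_sum (e : G.carrier) (ηs : List (G.carrier → K))
    (h : ∀ η ∈ ηs, η (G.inv e) = - η e) :
    ∑ i ∈ Finset.range (ηs.length + 1),
      G.edgeInt K e (ηs.take i) * G.edgeInt K (G.inv e) (ηs.drop i)
    = if ηs.isEmpty then 1 else 0 := by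
  set n := ηs.length with hn
  have hterm : ∀ i ∈ Finset.range (n+1),
      G.edgeInt K e (ηs.take i) * G.edgeInt K (G.inv e) (ηs.drop i)
      = ((-1)^n * (ηs.map (fun η => η e)).prod / (n.factorial : K))
        * ((-1)^i * (n.choose i : K)) := by
    intro i hi
    rw [Finset.mem_range, Nat.lt_succ_iff] at hi
    have hdm : (ηs.drop i).map (fun η => η (G.inv e))
        = ((ηs.drop i).map (fun η => η e)).map Neg.neg := by
      rw [List.map_map]
      exact List.map_congr_left (fun η hη => h η (List.mem_of_mem_drop hη))
    have hneg : ((-1 : K))^(n - i) = (-1)^n * (-1)^i := by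
      have h2 : ((-1:K))^(n-i) * ((-1:K))^i = (-1)^n := by
        rw [← pow_add, Nat.sub_add_cancel hi]
      calc ((-1:K))^(n-i) = ((-1:K))^(n-i) * ((-1:K))^i * (-1)^i := by
            rw [mul_assoc, ← pow_add, ← two_mul, pow_mul]
            simp
        _ = (-1)^n * (-1)^i := by rw [h2]
    have hchoose : (n.choose i : K) * (i.factorial : K) * ((n-i).factorial : K)
        = (n.factorial : K) := by
      exact_mod_cast congrArg (Nat.cast (R := K))
        (Nat.choose_mul_factorial_mul_factorial hi)
    have hif : ((i.factorial : K)) ≠ 0 := Nat.cast_ne_zero.mpr (Nat.factorial_ne_zero i)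
    have hnif : (((n-i).factorial : K)) ≠ 0 := Nat.cast_ne_zero.mpr (Nat.factorial_ne_zero _)
    have hC : ((n.choose i : K)) ≠ 0 := Nat.cast_ne_zero.mpr (Nat.choose_pos hi).ne'
    simp only [CombGraph.edgeInt, hdm, List.prod_map_neg, List.length_map, List.length_take,
      List.length_drop, min_eq_left hi, ← hn]
    have hsplit : (List.take i (List.map (fun η => η e) ηs)).prod *
        (List.drop i (List.map (fun η => η e) ηs)).prod
        = (List.map (fun η => η e) ηs).prod := by
      rw [← List.prod_append, List.take_append_drop]
    rw [hneg, ← hchoose, ← hsplit, ← List.map_take, ← List.map_drop]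
    field_simp
  rw [Finset.sum_congr rfl hterm, ← Finset.mul_sum]
  have halt : (∑ i ∈ Finset.range (n+1), ((-1:K))^i * (n.choose i : K))
      = if n = 0 then 1 else 0 := by
    by_cases h0 : n = 0
    · simp [h0]
    · have hz := Int.alternating_sum_range_choose_of_ne h0
      have h2 := congrArg (fun z : ℤ => (z : K)) hz
      push_cast at h2
      simpa [h0] using h2
  rw [halt]
  by_cases h0 : n = 0
  · have hnil : ηs = [] := List.length_eq_zero_iff.mp (by rw [← hn]; exact h0)
    subst hnil
    simp [h0]
  · have hne : ¬ ηs.isEmpty := by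
      simp only [List.isEmpty_iff]
      intro hnil; exact h0 (by simp [hn, hnil])
    simp [h0, hne]

lemma CombGraph.iint_pair_cons (e : G.carrier) (p : List G.carrier)
    (ηs : List (G.carrier → K)) (h : ∀ η ∈ ηs, η (G.inv e) = - η e) :
    G.iint K (e :: G.inv e :: p) ηs = G.iint K p ηs := by
  have key : G.iint K (e :: G.inv e :: p) ηs
      = ∑ k ∈ Finset.range (ηs.length + 1),
          (∑ i ∈ Finset.range (k+1),
            G.edgeInt K e (ηs.take i) * G.edgeInt K (G.inv e) ((ηs.take k).drop i))
          * G.iint K p (ηs.drop k) := by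
    rw [CombGraph.iint]
    simp only [CombGraph.iint, List.length_drop, Finset.mul_sum, Finset.sum_mul]
    rw [Finset.sum_sigma', Finset.sum_sigma']
    refine Finset.sum_bij' (fun x _ => (⟨x.1 + x.2, x.1⟩ : Σ _ : ℕ, ℕ))
      (fun x _ => (⟨x.2, x.1 - x.2⟩ : Σ _ : ℕ, ℕ)) ?_ ?_ ?_ ?_ ?_
    · rintro ⟨i, j⟩ hm
      simp only [Finset.mem_sigma, Finset.mem_range, Nat.lt_succ_iff] at hm ⊢
      omega
    · rintro ⟨k, i⟩ hm
      simp only [Finset.mem_sigma, Finset.mem_range, Nat.lt_succ_iff] at hm ⊢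
      omega
    · rintro ⟨i, j⟩ hm
      simp only [Finset.mem_sigma, Finset.mem_range, Nat.lt_succ_iff] at hm
      simp
    · rintro ⟨k, i⟩ hm
      simp only [Finset.mem_sigma, Finset.mem_range, Nat.lt_succ_iff] at hm
      have hki : i + (k - i) = k := by omega
      simp [hki]
    · rintro ⟨i, j⟩ hm
      simp only [Finset.mem_sigma, Finset.mem_range, Nat.lt_succ_iff] at hm
      rw [List.take_drop, List.drop_drop]
      ring_nf
  rw [key]
  have hinner : ∀ k ∈ Finset.range (ηs.length + 1),
      (∑ i ∈ Finset.range (k+1),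
        G.edgeInt K e (ηs.take i) * G.edgeInt K (G.inv e) ((ηs.take k).drop i))
      * G.iint K p (ηs.drop k)
      = (if (ηs.take k).isEmpty then 1 else 0) * G.iint K p (ηs.drop k) := by
    intro k hk
    rw [Finset.mem_range, Nat.lt_succ_iff] at hk
    congr 1
    have hlen : (ηs.take k).length = k := by
      rw [List.length_take]; exact min_eq_left hk
    have := CombGraph.pair_sum G K e (ηs.take k)
      (fun η hη => h η (List.mem_of_mem_take hη))
    rw [hlen] at this
    rw [← this]
    refine Finset.sum_congr rfl (fun i hi => ?_)
    rw [Finset.mem_range, Nat.lt_succ_iff] at hi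
    rw [List.take_take, min_eq_left hi]
  rw [Finset.sum_congr rfl hinner]
  rw [Finset.sum_eq_single 0]
  · simp
  · intro k hk hk0
    rw [Finset.mem_range, Nat.lt_succ_iff] at hk
    have : ¬ (ηs.take k).isEmpty := by
      simp only [List.isEmpty_iff, List.take_eq_nil_iff]
      rintro (h1 | h1)
      · exact hk0 h1
      · subst h1; simp at hk; exact hk0 hk
    simp [this]
  · intro h0
    simp at h0

lemma CombGraph.iint_insert (p₁ p₂ : List G.carrier) (e : G.carrier)
    (ηs : List (G.carrier → K)) (h : ∀ η ∈ ηs, η (G.inv e) = - η e) :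
    G.iint K (p₁ ++ e :: G.inv e :: p₂) ηs = G.iint K (p₁ ++ p₂) ηs := by
  induction p₁ generalizing ηs with
  | nil => simpa using CombGraph.iint_pair_cons G K e p₂ ηs h
  | cons f p₁ ih =>
    simp only [List.cons_append, CombGraph.iint]
    refine Finset.sum_congr rfl (fun i _ => ?_)
    exact congrArg (G.edgeInt K f (ηs.take i) * ·)
      (ih (ηs.drop i) (fun η hη => h η (List.mem_of_mem_drop hη)))

end Aux

/-- **Homotopy invariance of combinatorial iterated integrals.**
If `p₁` is a path ending at a vertex `v` (or empty with `v` the chosen initial vertex),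
`p₂` is a path starting at `v`, and `e` is a closed directed edge with `i(e) = v`, then
inserting the backtrack `e, ē` between `p₁` and `p₂` does not change any combinatorial
iterated integral of tropical `1`-forms.  Consequently, combinatorial iterated
integration descends to homotopy classes of paths. -/
theorem iint_homotopy_invariant
    (G : CombGraph) (K : Type) [Field K] [CharZero K]
    {a v b : G.carrier} (p₁ p₂ : List G.carrier)
    (h₁ : G.IsPath a v p₁) (h₂ : G.IsPath v b p₂)
    (e : G.carrier) (he : G.IsClosedDir e) (hev : G.init e = v)
    (ηs : List (G.carrier → K)) (hηs : ∀ η ∈ ηs, η ∈ G.Omega1 K) :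
    G.iint K (p₁ ++ e :: G.inv e :: p₂) ηs = G.iint K (p₁ ++ p₂) ηs ∧
    ∀ (q q' : G.PathIn a b), Quot.mk (G.PathRel a b) q = Quot.mk (G.PathRel a b) q' →
      G.iint K q.1 ηs = G.iint K q'.1 ηs := by
  have hanti : ∀ η ∈ ηs, ∀ e', η (G.inv e') = - η e' := fun η hη => (hηs η hη).1
  constructor
  · exact CombGraph.iint_insert G K p₁ p₂ e ηs (fun η hη => hanti η hη e)
  · intro q q' hq
    have hgen := Quot.eqvGen_exact hq
    clear hq
    induction hgen with
    | rel x y hxy =>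
      obtain ⟨lx, hlx⟩ := x
      obtain ⟨ly, hly⟩ := y
      cases hxy with
      | insert p₁' p₂' e' he' =>
        exact (CombGraph.iint_insert G K p₁' p₂' e' ηs (fun η hη => hanti η hη e')).symm
    | refl x => rfl
    | symm x y _ ihr => exact ihr.symm
    | trans x y z _ _ ih1 ih2 => exact ih1.trans ih2
end
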